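/- (Theorem 1 (ii), (c)⇔(d).) Let n ≥ 2, 2 ≤ p ≤ ∞, Ω ⊆ ℝⁿ open and u ∈ C²(Ω). Then the following are equivalent: (c) for every isometry T : ℝⁿ → ℝⁿ (T(x) = Qᵀ(x−x₀) with Q orthogonal and x₀ ∈ ℝⁿ), the function u + u∘T satisfies Δ_p[u + u∘T] ≤ 0 at every point of Ω ∩ T⁻¹(Ω); (d) D_p u ≤ 0 at every point of Ω. -/

import Mathlib

open scoped ENNReal
open Filter Matrix

noncomputable section

/-- Hessian matrix of `u` at `x` (entries are second partial derivatives). -/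
def hess {n : ℕ} (u : EuclideanSpace ℝ (Fin n) → ℝ) (x : EuclideanSpace ℝ (Fin n)) :
    Matrix (Fin n) (Fin n) ℝ :=
  Matrix.of fun i j =>
    iteratedFDeriv ℝ 2 u x ![EuclideanSpace.single i 1, EuclideanSpace.single j 1]

/-- Laplacian: trace of the Hessian. -/
def lapl {n : ℕ} (u : EuclideanSpace ℝ (Fin n) → ℝ) (x : EuclideanSpace ℝ (Fin n)) : ℝ :=
  ∑ i, hess u x i i

/-- Quadratic form `zᵀ A z`. -/
def quadForm {n : ℕ} (A : Matrix (Fin n) (Fin n) ℝ) (z : EuclideanSpace ℝ (Fin n)) : ℝ :=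
  ∑ i, ∑ j, z i * A i j * z j

/-- Largest eigenvalue of a (symmetric) matrix: the max of `zᵀAz` over unit vectors `z`. -/
def lamMax {n : ℕ} (A : Matrix (Fin n) (Fin n) ℝ) : ℝ :=
  sSup {r : ℝ | ∃ z : EuclideanSpace ℝ (Fin n), ‖z‖ = 1 ∧ r = quadForm A z}

open Classical in
/-- Dominative p-Laplacian `D_p u(x)`, for `2 ≤ p ≤ ∞`. -/
def Dop {n : ℕ} (p : ℝ≥0∞) (u : EuclideanSpace ℝ (Fin n) → ℝ)
    (x : EuclideanSpace ℝ (Fin n)) : ℝ :=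
  if p = ⊤ then lamMax (hess u x)
  else (p.toReal - 2) * lamMax (hess u x) + lapl u x

open Classical in
/-- p-Laplacian `Δ_p u(x)` (the `∞`-Laplacian `∇u H u ∇uᵀ` for `p = ∞`).
For finite `p`, `Δ_p u = |∇u|^{p-2} Δu + (p-2)|∇u|^{p-4} ∇u Hu ∇uᵀ` with real powers,
which is automatically `0` at critical points when `p > 2` and `Δu` when `p = 2`. -/
def DeltaOp {n : ℕ} (p : ℝ≥0∞) (u : EuclideanSpace ℝ (Fin n) → ℝ)
    (x : EuclideanSpace ℝ (Fin n)) : ℝ :=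
  if p = ⊤ then quadForm (hess u x) (gradient u x)
  else ‖gradient u x‖ ^ (p.toReal - 2) * lapl u x
    + (p.toReal - 2) * ‖gradient u x‖ ^ (p.toReal - 4) * quadForm (hess u x) (gradient u x)

open Classical in
/-- Radial profile `W_{k,p}` of the fundamental solution of the p-Laplace equation in ℝᵏ. -/
def Wfun (p : ℝ≥0∞) (k : ℕ) (r : ℝ) : ℝ :=
  if p = ⊤ ∨ k = 1 then -r
  else if p.toReal = k then -Real.log r
  else -((p.toReal - 1) / (p.toReal - k)) * r ^ ((p.toReal - k) / (p.toReal - 1))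

/-- Euclidean norm of a plain vector in `Fin k → ℝ`. -/
def enorm' {k : ℕ} (v : Fin k → ℝ) : ℝ := Real.sqrt (∑ i, v i ^ 2)

/-- `u : Ω → (-∞,∞]` is a viscosity supersolution of `G(∇u, Hu) = 0` on `Ω`:
lower semicontinuous, `> -∞`, finite on a dense subset of `Ω`, and every `C²`
test function `φ` touching `u` from below at `x₀ ∈ Ω` satisfies `G φ x₀ ≤ 0`. -/
def ViscSupersol {n : ℕ}
    (G : (EuclideanSpace ℝ (Fin n) → ℝ) → EuclideanSpace ℝ (Fin n) → ℝ)
    (Ω : Set (EuclideanSpace ℝ (Fin n))) (u : EuclideanSpace ℝ (Fin n) → EReal) : Prop :=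
  LowerSemicontinuousOn u Ω ∧
  (∀ x ∈ Ω, u x ≠ ⊥) ∧
  Ω ⊆ closure {x | x ∈ Ω ∧ u x ≠ ⊤} ∧
  ∀ x₀ ∈ Ω, ∀ φ : EuclideanSpace ℝ (Fin n) → ℝ,
    ContDiffAt ℝ 2 φ x₀ → (φ x₀ : EReal) = u x₀ →
    (∀ᶠ x in nhdsWithin x₀ Ω, (φ x : EReal) ≤ u x) → G φ x₀ ≤ 0

open Classical in
/-- EReal-valued fundamental solution `w_{m,p}` on ℝᵐ, equal to `⊤` at the pole when `p ≤ m`,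
`p ≠ ∞`. -/
def wEReal (p : ℝ≥0∞) (m : ℕ) (x : EuclideanSpace ℝ (Fin m)) : EReal :=
  if x = 0 ∧ p ≤ (m : ℝ≥0∞) ∧ p ≠ ⊤ then (⊤ : EReal)
  else ((Wfun p m ‖x‖ : ℝ) : EReal)

end

/-!
For `v = u + u ∘ T` with `T y = Qᵀ (y - x₀)` one has `Hv(x) = Hu(x) + Q Hu(T x) Qᵀ`. Viewed as a
function of the Hessian, `D_p` is subadditive and invariant under orthogonal conjugation, so (d)
gives `D_p v(x) ≤ D_p u(x) + D_p u(T x) ≤ 0`; and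
`Δ_p v = |∇v|^(p-4) ((p-2) ∇vᵀ Hv ∇v + Δv |∇v|²) ≤ |∇v|^(p-2) D_p v`.

Conversely, if `⟪z, ∇u(x)⟫ ≠ 0`, let `T` be the half-turn about the line `x + ℝ z`. Then `∇v(x)`
is a nonzero multiple of `z`, `zᵀ Hv(x) z = 2 zᵀ Hu(x) z` and `Δv(x) = 2 Δu(x)`, so (c) at `x`
gives `(p-2) zᵀ Hu(x) z + Δu(x) |z|² ≤ 0`. This extends to all `z` by continuity, and then to
critical points `x`: either `x` is a limit of noncritical points, or `∇u`, hence `Hu`, vanishes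
near `x`.
-/

open InnerProductSpace Topology

section

variable {n : ℕ}

local notation "𝔼" => EuclideanSpace ℝ (Fin n)

local notation "𝕃" => toEuclideanCLM (n := Fin n) (𝕜 := ℝ)

section QuadForm

lemma quadForm_eq_inner (A : Matrix (Fin n) (Fin n) ℝ) (z : 𝔼) :
    quadForm A z = ⟪z, 𝕃 A z⟫_ℝ := by
  simp only [inner_toEuclideanCLM, quadForm, dotProduct, mulVec, Finset.mul_sum, mul_assoc]

lemma toEuclideanCLM_transpose (M : Matrix (Fin n) (Fin n) ℝ) :
    𝕃 Mᵀ = ContinuousLinearMap.adjoint (𝕃 M) := by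
  rw [← conjTranspose_eq_transpose_of_trivial, ← star_eq_conjTranspose, map_star,
    ContinuousLinearMap.star_eq_adjoint]

lemma inner_toEuclideanCLM_transpose (M : Matrix (Fin n) (Fin n) ℝ) (x y : 𝔼) :
    ⟪𝕃 Mᵀ x, y⟫_ℝ = ⟪x, 𝕃 M y⟫_ℝ := by
  rw [toEuclideanCLM_transpose, ContinuousLinearMap.adjoint_inner_left]

lemma toEuclideanCLM_mul_apply (A B : Matrix (Fin n) (Fin n) ℝ) (z : 𝔼) :
    𝕃 (A * B) z = 𝕃 A (𝕃 B z) := by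
  ext i
  simp [mulVec_mulVec]

lemma toEuclideanCLM_mul_transpose_apply {Q : Matrix (Fin n) (Fin n) ℝ} (hQ : Qᵀ * Q = 1)
    (z : 𝔼) : 𝕃 Q (𝕃 Qᵀ z) = z := by
  simp [← toEuclideanCLM_mul_apply, mul_eq_one_comm.mp hQ]

lemma toEuclideanCLM_transpose_mul_apply {Q : Matrix (Fin n) (Fin n) ℝ} (hQ : Qᵀ * Q = 1)
    (z : 𝔼) : 𝕃 Qᵀ (𝕃 Q z) = z := by
  simp [← toEuclideanCLM_mul_apply, hQ]

lemma norm_toEuclideanCLM_transpose {Q : Matrix (Fin n) (Fin n) ℝ} (hQ : Qᵀ * Q = 1) (z : 𝔼) :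
    ‖𝕃 Qᵀ z‖ = ‖z‖ := by
  rw [← sq_eq_sq₀ (norm_nonneg _) (norm_nonneg _), ← real_inner_self_eq_norm_sq,
    ← real_inner_self_eq_norm_sq, inner_toEuclideanCLM_transpose,
    toEuclideanCLM_mul_transpose_apply hQ]

lemma quadForm_add (A B : Matrix (Fin n) (Fin n) ℝ) (z : 𝔼) :
    quadForm (A + B) z = quadForm A z + quadForm B z := by
  simp only [quadForm_eq_inner, map_add, _root_.add_apply, inner_add_right]

lemma quadForm_smul (A : Matrix (Fin n) (Fin n) ℝ) (c : ℝ) (z : 𝔼) :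
    quadForm A (c • z) = c ^ 2 * quadForm A z := by
  simp only [quadForm_eq_inner, map_smul, real_inner_smul_left, real_inner_smul_right]
  ring

lemma quadForm_zero_left (z : 𝔼) : quadForm 0 z = 0 := by
  simp [quadForm]

lemma quadForm_zero_right (A : Matrix (Fin n) (Fin n) ℝ) : quadForm A 0 = 0 := by
  simp [quadForm]

lemma quadForm_conj (Q A : Matrix (Fin n) (Fin n) ℝ) (z : 𝔼) :
    quadForm (Q * A * Qᵀ) z = quadForm A (𝕃 Qᵀ z) := by
  simp only [quadForm_eq_inner, toEuclideanCLM_mul_apply, ← inner_toEuclideanCLM_transpose]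

lemma continuous_quadForm :
    Continuous fun Az : Matrix (Fin n) (Fin n) ℝ × 𝔼 => quadForm Az.1 Az.2 := by
  unfold quadForm
  fun_prop

lemma bddAbove_quadForm_sphere (A : Matrix (Fin n) (Fin n) ℝ) :
    BddAbove {r : ℝ | ∃ z : 𝔼, ‖z‖ = 1 ∧ r = quadForm A z} := by
  refine ⟨‖𝕃 A‖, ?_⟩
  rintro r ⟨z, hz, rfl⟩
  calc quadForm A z = ⟪z, 𝕃 A z⟫_ℝ := quadForm_eq_inner A z
    _ ≤ ‖z‖ * ‖𝕃 A z‖ := real_inner_le_norm _ _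
    _ ≤ ‖z‖ * (‖𝕃 A‖ * ‖z‖) := by gcongr; exact (𝕃 A).le_opNorm z
    _ = ‖𝕃 A‖ := by rw [hz]; ring

lemma quadForm_le_lamMax (A : Matrix (Fin n) (Fin n) ℝ) {z : 𝔼} (hz : ‖z‖ = 1) :
    quadForm A z ≤ lamMax A :=
  le_csSup (bddAbove_quadForm_sphere A) ⟨z, hz, rfl⟩

lemma lamMax_le (hn : 0 < n) {A : Matrix (Fin n) (Fin n) ℝ} {r : ℝ}
    (h : ∀ z : 𝔼, ‖z‖ = 1 → quadForm A z ≤ r) : lamMax A ≤ r := by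
  refine csSup_le ⟨_, EuclideanSpace.single ⟨0, hn⟩ 1, by simp, rfl⟩ ?_
  rintro s ⟨z, hz, rfl⟩
  exact h z hz

lemma mul_lamMax_le (hn : 0 < n) {A : Matrix (Fin n) (Fin n) ℝ} {c r : ℝ} (hc : 0 ≤ c)
    (h : ∀ z : 𝔼, ‖z‖ = 1 → c * quadForm A z ≤ r) : c * lamMax A ≤ r := by
  rcases hc.eq_or_lt with rfl | hc
  · simpa using h _ (by simp : ‖EuclideanSpace.single (⟨0, hn⟩ : Fin n) (1 : ℝ)‖ = 1)
  · rw [← le_div_iff₀' hc]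
    exact lamMax_le hn fun z hz => (le_div_iff₀' hc).mpr (h z hz)

lemma quadForm_le_lamMax_mul_sq (A : Matrix (Fin n) (Fin n) ℝ) (z : 𝔼) :
    quadForm A z ≤ lamMax A * ‖z‖ ^ 2 := by
  rcases eq_or_ne z 0 with rfl | hz
  · simp [quadForm_zero_right]
  · have hz' : ‖z‖ ≠ 0 := norm_ne_zero_iff.mpr hz
    have hunit := quadForm_le_lamMax A (z := ‖z‖⁻¹ • z) (by simp [norm_smul, hz'])
    rw [quadForm_smul, inv_pow, inv_mul_le_iff₀ (by positivity)] at hunit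
    linarith

lemma lamMax_add_le (hn : 0 < n) (A B : Matrix (Fin n) (Fin n) ℝ) :
    lamMax (A + B) ≤ lamMax A + lamMax B :=
  lamMax_le hn fun z hz => by
    rw [quadForm_add]
    exact add_le_add (quadForm_le_lamMax A hz) (quadForm_le_lamMax B hz)

lemma lamMax_conj_le (hn : 0 < n) {Q : Matrix (Fin n) (Fin n) ℝ} (hQ : Qᵀ * Q = 1)
    (A : Matrix (Fin n) (Fin n) ℝ) : lamMax (Q * A * Qᵀ) ≤ lamMax A :=
  lamMax_le hn fun z hz => by
    rw [quadForm_conj]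
    exact quadForm_le_lamMax A (by rw [norm_toEuclideanCLM_transpose hQ, hz])

end QuadForm

section Dominative

/-- `dominative p (hess u x)` is `Dop p u x`, and it is the maximum of the quadratic form
`dominativeQuadForm p (hess u x)` on the unit sphere. -/
noncomputable def dominative (p : ℝ≥0∞) (A : Matrix (Fin n) (Fin n) ℝ) : ℝ :=
  if p = ⊤ then lamMax A else (p.toReal - 2) * lamMax A + A.trace

noncomputable def dominativeQuadForm (p : ℝ≥0∞) (A : Matrix (Fin n) (Fin n) ℝ) (z : 𝔼) : ℝ :=
  if p = ⊤ then quadForm A z else (p.toReal - 2) * quadForm A z + A.trace * ‖z‖ ^ 2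

variable {p : ℝ≥0∞}

lemma two_le_toReal (hp : 2 ≤ p) (hp_top : p ≠ ⊤) : 2 ≤ p.toReal := by
  simpa using ENNReal.toReal_mono hp_top hp

lemma dominativeQuadForm_le_mul_sq (hp : 2 ≤ p) (A : Matrix (Fin n) (Fin n) ℝ) (z : 𝔼) :
    dominativeQuadForm p A z ≤ dominative p A * ‖z‖ ^ 2 := by
  have h := quadForm_le_lamMax_mul_sq A z
  unfold dominativeQuadForm dominative
  split_ifs with hp_top
  · exact h
  · have := two_le_toReal hp hp_top
    nlinarith

lemma dominative_nonpos_of_forall (hn : 0 < n) (hp : 2 ≤ p) {A : Matrix (Fin n) (Fin n) ℝ}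
    (h : ∀ z, dominativeQuadForm p A z ≤ 0) : dominative p A ≤ 0 := by
  unfold dominative
  split_ifs with hp_top
  · exact lamMax_le hn fun z _ => by simpa [dominativeQuadForm, hp_top] using h z
  · have hc : 0 ≤ p.toReal - 2 := by linarith [two_le_toReal hp hp_top]
    have hlam := mul_lamMax_le hn hc (r := -A.trace) fun z hz => by
      have hAz := h z
      simp only [dominativeQuadForm, hp_top, if_false, hz] at hAz
      linarith
    linarith

lemma dominative_add_le (hn : 0 < n) (hp : 2 ≤ p) (A B : Matrix (Fin n) (Fin n) ℝ) :
    dominative p (A + B) ≤ dominative p A + dominative p B := by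
  have h := lamMax_add_le hn A B
  unfold dominative
  split_ifs with hp_top
  · exact h
  · have := two_le_toReal hp hp_top
    rw [trace_add]
    nlinarith

lemma dominative_conj_le (hn : 0 < n) (hp : 2 ≤ p) {Q : Matrix (Fin n) (Fin n) ℝ}
    (hQ : Qᵀ * Q = 1) (A : Matrix (Fin n) (Fin n) ℝ) :
    dominative p (Q * A * Qᵀ) ≤ dominative p A := by
  have h := lamMax_conj_le hn hQ A
  unfold dominative
  split_ifs with hp_top
  · exact h
  · have := two_le_toReal hp hp_top
    rw [trace_mul_cycle, hQ, one_mul]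
    nlinarith

lemma dominativeQuadForm_add (A B : Matrix (Fin n) (Fin n) ℝ) (z : 𝔼) :
    dominativeQuadForm p (A + B) z = dominativeQuadForm p A z + dominativeQuadForm p B z := by
  unfold dominativeQuadForm
  split_ifs
  · exact quadForm_add A B z
  · rw [quadForm_add, trace_add]
    ring

lemma dominativeQuadForm_smul (A : Matrix (Fin n) (Fin n) ℝ) (c : ℝ) (z : 𝔼) :
    dominativeQuadForm p A (c • z) = c ^ 2 * dominativeQuadForm p A z := by
  unfold dominativeQuadForm
  split_ifs
  · exact quadForm_smul A c z
  · rw [quadForm_smul, norm_smul, Real.norm_eq_abs, mul_pow, sq_abs]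
    ring

lemma dominativeQuadForm_conj {Q : Matrix (Fin n) (Fin n) ℝ} (hQ : Qᵀ * Q = 1)
    (A : Matrix (Fin n) (Fin n) ℝ) (z : 𝔼) :
    dominativeQuadForm p (Q * A * Qᵀ) z = dominativeQuadForm p A (𝕃 Qᵀ z) := by
  simp only [dominativeQuadForm, quadForm_conj, trace_mul_cycle, hQ, one_mul,
    norm_toEuclideanCLM_transpose hQ]

lemma dominativeQuadForm_zero_left (z : 𝔼) : dominativeQuadForm p 0 z = 0 := by
  simp [dominativeQuadForm, quadForm_zero_left]

lemma continuous_dominativeQuadForm :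
    Continuous fun Az : Matrix (Fin n) (Fin n) ℝ × 𝔼 => dominativeQuadForm p Az.1 Az.2 := by
  unfold dominativeQuadForm
  split_ifs
  · exact continuous_quadForm
  · have := continuous_quadForm (n := n)
    unfold Matrix.trace Matrix.diag
    fun_prop

end Dominative

section PLaplacian

variable {p : ℝ≥0∞} {v : EuclideanSpace ℝ (Fin n) → ℝ} {x : EuclideanSpace ℝ (Fin n)}

lemma DeltaOp_nonpos_iff (hv : gradient v x ≠ 0) :
    DeltaOp p v x ≤ 0 ↔ dominativeQuadForm p (hess v x) (gradient v x) ≤ 0 := by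
  unfold DeltaOp dominativeQuadForm
  split_ifs with hp_top
  · rfl
  · have hr : 0 < ‖gradient v x‖ := norm_pos_iff.mpr hv
    have hfactor : ‖gradient v x‖ ^ (p.toReal - 2) * lapl v x
        + (p.toReal - 2) * ‖gradient v x‖ ^ (p.toReal - 4) * quadForm (hess v x) (gradient v x)
        = ‖gradient v x‖ ^ (p.toReal - 4) * ((p.toReal - 2) * quadForm (hess v x) (gradient v x)
          + (hess v x).trace * ‖gradient v x‖ ^ 2) := by
      have hpow : ‖gradient v x‖ ^ (p.toReal - 2) = ‖gradient v x‖ ^ (p.toReal - 4)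
          * ‖gradient v x‖ ^ 2 := by
        rw [← Real.rpow_natCast, ← Real.rpow_add hr]
        ring_nf
      rw [hpow]
      unfold lapl Matrix.trace Matrix.diag
      ring
    rw [hfactor]
    simpa using mul_le_mul_iff_of_pos_left (c := 0) (Real.rpow_pos_of_pos hr (p.toReal - 4))

lemma DeltaOp_nonpos_of_dominative_nonpos (hp : 2 ≤ p) (h : dominative p (hess v x) ≤ 0) :
    DeltaOp p v x ≤ 0 := by
  by_cases hv : gradient v x = 0
  · unfold DeltaOp
    split_ifs with hp_top
    · simp [hv, quadForm_zero_right]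
    · rcases (two_le_toReal hp hp_top).eq_or_lt with hp2 | hp2
      · simpa [← hp2, dominative, hp_top, lapl, Matrix.trace] using h
      · simp [hv, quadForm_zero_right, Real.zero_rpow (by linarith : p.toReal - 2 ≠ 0)]
  · rw [DeltaOp_nonpos_iff hv]
    exact (dominativeQuadForm_le_mul_sq hp _ _).trans
      (mul_nonpos_of_nonpos_of_nonneg h (sq_nonneg _))

end PLaplacian

section Hessian

lemma sum_smul_single (z : 𝔼) : ∑ k, z k • EuclideanSpace.single k (1 : ℝ) = z := by
  simpa using (EuclideanSpace.basisFun (Fin n) ℝ).sum_repr z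

lemma bilinear_apply_eq_sum (B : 𝔼 →L[ℝ] 𝔼 →L[ℝ] ℝ) (a b : 𝔼) :
    B a b = ∑ k, ∑ l, a k * b l * B (EuclideanSpace.single k 1) (EuclideanSpace.single l 1) := by
  conv_lhs => rw [← sum_smul_single a, ← sum_smul_single b]
  simp only [map_sum, map_smul, FunLike.coe_sum, Finset.sum_apply,
    FunLike.coe_smul, Pi.smul_apply, smul_eq_mul, Finset.mul_sum]
  rw [Finset.sum_comm]
  refine Finset.sum_congr rfl fun k _ => Finset.sum_congr rfl fun l _ => ?_
  ring

lemma iteratedFDeriv_two_apply_eq_sum (u : 𝔼 → ℝ) (y : 𝔼) (m : Fin 2 → 𝔼) :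
    iteratedFDeriv ℝ 2 u y m = ∑ k, ∑ l, m 0 k * m 1 l * hess u y k l := by
  simp only [hess, Matrix.of_apply, iteratedFDeriv_two_apply]
  exact bilinear_apply_eq_sum _ _ _

lemma hess_comp_affine {Ω : Set 𝔼} (hΩ : IsOpen Ω) {u : 𝔼 → ℝ} (hu : ContDiffOn ℝ 2 u Ω)
    (M : Matrix (Fin n) (Fin n) ℝ) (x₀ : 𝔼) {x : 𝔼} (hx : 𝕃 M (x - x₀) ∈ Ω) :
    hess (fun y => u (𝕃 M (y - x₀))) x = Mᵀ * hess u (𝕃 M (x - x₀)) * M := by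
  have hpre : IsOpen (𝕃 M ⁻¹' Ω) := hΩ.preimage (𝕃 M).continuous
  have hD : iteratedFDeriv ℝ 2 (fun y => u (𝕃 M (y - x₀))) x
      = (iteratedFDeriv ℝ 2 u (𝕃 M (x - x₀))).compContinuousLinearMap fun _ => 𝕃 M := by
    change iteratedFDeriv ℝ 2 (fun y => (u ∘ 𝕃 M) (y - x₀)) x = _
    rw [iteratedFDeriv_comp_sub, ← iteratedFDerivWithin_of_isOpen 2 hpre hx,
      (𝕃 M).iteratedFDerivWithin_comp_right hu hΩ.uniqueDiffOn hpre.uniqueDiffOn hx le_rfl,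
      iteratedFDerivWithin_of_isOpen 2 hΩ hx]
  ext i j
  rw [hess, Matrix.of_apply, hD, ContinuousMultilinearMap.compContinuousLinearMap_apply,
    iteratedFDeriv_two_apply_eq_sum]
  simp only [Fin.isValue, cons_val_zero, cons_val_one, cons_val_fin_one, ofLp_toEuclideanCLM,
    PiLp.ofLp_single, mulVec_single, MulOpposite.op_one, one_smul, col_apply, Matrix.mul_apply,
    transpose_apply, Finset.sum_mul]
  rw [Finset.sum_comm]
  refine Finset.sum_congr rfl fun k _ => Finset.sum_congr rfl fun l _ => ?_
  ring

lemma hess_add {f g : 𝔼 → ℝ} {x : 𝔼} (hf : ContDiffAt ℝ 2 f x) (hg : ContDiffAt ℝ 2 g x) :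
    hess (fun y => f y + g y) x = hess f x + hess g x := by
  ext i j
  simp only [hess, Matrix.of_apply, Matrix.add_apply, fun_iteratedFDeriv_add_apply hf hg,
    _root_.add_apply]

lemma contDiffAt_comp_affine {Ω : Set 𝔼} (hΩ : IsOpen Ω) {u : 𝔼 → ℝ}
    (hu : ContDiffOn ℝ 2 u Ω) (M : Matrix (Fin n) (Fin n) ℝ) (x₀ : 𝔼) {x : 𝔼}
    (hx : 𝕃 M (x - x₀) ∈ Ω) : ContDiffAt ℝ 2 (fun y => u (𝕃 M (y - x₀))) x := by
  have hT : ContDiff ℝ 2 fun y => 𝕃 M (y - x₀) := by fun_prop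
  exact ContDiffAt.comp (g := u) x (hu.contDiffAt (hΩ.mem_nhds hx)) hT.contDiffAt

lemma hasGradientAt_comp_affine {E : Type*} [NormedAddCommGroup E] [InnerProductSpace ℝ E]
    [CompleteSpace E] {u : E → ℝ} {g : E} (L : E →L[ℝ] E) (x₀ : E) {x : E}
    (hu : HasGradientAt u g (L (x - x₀))) :
    HasGradientAt (fun y => u (L (y - x₀))) (ContinuousLinearMap.adjoint L g) x := by
  have hdual : (toDual ℝ E g).comp L = toDual ℝ E (ContinuousLinearMap.adjoint L g) := by
    ext w
    simp [ContinuousLinearMap.adjoint_inner_left]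
  rw [hasGradientAt_iff_hasFDerivAt, ← hdual]
  exact hu.hasFDerivAt.comp x (L.hasFDerivAt.comp x ((hasFDerivAt_id x).sub_const x₀))

lemma continuousOn_hess {Ω : Set 𝔼} (hΩ : IsOpen Ω) {u : 𝔼 → ℝ} (hu : ContDiffOn ℝ 2 u Ω) :
    ContinuousOn (hess u) Ω := by
  intro x hx
  have h := ((hu.contDiffAt (hΩ.mem_nhds hx)).iteratedFDeriv_right (m := 0) (i := 2)
    (by norm_num)).continuousAt
  refine (continuousAt_pi.2 fun i => continuousAt_pi.2 fun j => ?_).continuousWithinAt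
  exact (continuous_eval_const _).continuousAt.comp h

lemma hess_eq_zero_of_gradient_eventuallyEq_zero {u : 𝔼 → ℝ} {x : 𝔼}
    (h : ∀ᶠ y in 𝓝 x, gradient u y = 0) : hess u x = 0 := by
  have hfd : fderiv ℝ u =ᶠ[𝓝 x] fun _ => 0 :=
    h.mono fun y hy => (LinearIsometryEquiv.map_eq_zero_iff _).mp hy
  ext i j
  simp [hess, iteratedFDeriv_two_apply, hfd.fderiv_eq]

end Hessian

section HalfTurn

noncomputable def halfTurn (z : 𝔼) : Matrix (Fin n) (Fin n) ℝ :=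
  (2 / ‖z‖ ^ 2) • vecMulVec z.ofLp z.ofLp - 1

lemma halfTurn_transpose (z : 𝔼) : (halfTurn z)ᵀ = halfTurn z := by
  simp [halfTurn, transpose_vecMulVec]

lemma toEuclideanCLM_halfTurn (z w : 𝔼) :
    𝕃 (halfTurn z) w = (2 * ⟪z, w⟫_ℝ / ‖z‖ ^ 2) • z - w := by
  ext i
  simp [halfTurn, vecMulVec_mulVec, EuclideanSpace.inner_eq_star_dotProduct,
    dotProduct_comm w.ofLp]
  ring

lemma halfTurn_orthogonal {z : 𝔼} (hz : z ≠ 0) : (halfTurn z)ᵀ * halfTurn z = 1 := by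
  have hz' : ‖z‖ ^ 2 ≠ 0 := by positivity
  refine EquivLike.injective 𝕃 (ContinuousLinearMap.ext fun w => ?_)
  rw [halfTurn_transpose, toEuclideanCLM_mul_apply, map_one, one_apply_eq_self,
    toEuclideanCLM_halfTurn, toEuclideanCLM_halfTurn]
  simp only [inner_sub_right, real_inner_smul_right, real_inner_self_eq_norm_sq]
  field_simp
  module

end HalfTurn

section IsometrySum

variable {p : ℝ≥0∞} {Ω : Set (EuclideanSpace ℝ (Fin n))}
  {u : EuclideanSpace ℝ (Fin n) → ℝ}

lemma hess_add_comp_affine (hΩ : IsOpen Ω) (hu : ContDiffOn ℝ 2 u Ω)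
    (M : Matrix (Fin n) (Fin n) ℝ) (x₀ : 𝔼) {x : 𝔼} (hx : x ∈ Ω) (hTx : 𝕃 M (x - x₀) ∈ Ω) :
    hess (fun y => u y + u (𝕃 M (y - x₀))) x = hess u x + Mᵀ * hess u (𝕃 M (x - x₀)) * M := by
  rw [hess_add (hu.contDiffAt (hΩ.mem_nhds hx)) (contDiffAt_comp_affine hΩ hu M x₀ hTx),
    hess_comp_affine hΩ hu M x₀ hTx]

lemma hasGradientAt_add_comp_affine (hΩ : IsOpen Ω) (hu : ContDiffOn ℝ 2 u Ω)
    (M : Matrix (Fin n) (Fin n) ℝ) (x₀ : 𝔼) {x : 𝔼} (hx : x ∈ Ω) (hTx : 𝕃 M (x - x₀) ∈ Ω) :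
    HasGradientAt (fun y => u y + u (𝕃 M (y - x₀)))
      (gradient u x + 𝕃 Mᵀ (gradient u (𝕃 M (x - x₀)))) x := by
  have hdiff : ∀ y ∈ Ω, DifferentiableAt ℝ u y := fun y hy =>
    (hu.contDiffAt (hΩ.mem_nhds hy)).differentiableAt (by norm_num)
  rw [toEuclideanCLM_transpose, hasGradientAt_iff_hasFDerivAt, map_add]
  exact (hdiff x hx).hasGradientAt.hasFDerivAt.add
    (hasGradientAt_comp_affine (𝕃 M) x₀ (hdiff _ hTx).hasGradientAt).hasFDerivAt

lemma DeltaOp_add_comp_nonpos (hn : 0 < n) (hp : 2 ≤ p) (hΩ : IsOpen Ω)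
    (hu : ContDiffOn ℝ 2 u Ω) (hD : ∀ x ∈ Ω, Dop p u x ≤ 0) {Q : Matrix (Fin n) (Fin n) ℝ}
    (hQ : Qᵀ * Q = 1) (x₀ : 𝔼) {x : 𝔼} (hx : x ∈ Ω) (hTx : 𝕃 Qᵀ (x - x₀) ∈ Ω) :
    DeltaOp p (fun y => u y + u (𝕃 Qᵀ (y - x₀))) x ≤ 0 := by
  apply DeltaOp_nonpos_of_dominative_nonpos hp
  rw [hess_add_comp_affine hΩ hu Qᵀ x₀ hx hTx, transpose_transpose]
  calc dominative p (hess u x + Q * hess u (𝕃 Qᵀ (x - x₀)) * Qᵀ)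
      ≤ dominative p (hess u x) + dominative p (Q * hess u (𝕃 Qᵀ (x - x₀)) * Qᵀ) :=
        dominative_add_le hn hp _ _
    _ ≤ Dop p u x + Dop p u (𝕃 Qᵀ (x - x₀)) := add_le_add le_rfl (dominative_conj_le hn hp hQ _)
    _ ≤ 0 := add_nonpos (hD x hx) (hD _ hTx)

end IsometrySum

section Necessity

variable {p : ℝ≥0∞} {Ω : Set (EuclideanSpace ℝ (Fin n))}
  {u : EuclideanSpace ℝ (Fin n) → ℝ}

variable (hΩ : IsOpen Ω) (hu : ContDiffOn ℝ 2 u Ω)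
  (hc : ∀ Q : Matrix (Fin n) (Fin n) ℝ, Qᵀ * Q = 1 → ∀ x₀ x : EuclideanSpace ℝ (Fin n),
    x ∈ Ω → toEuclideanCLM (𝕜 := ℝ) Qᵀ (x - x₀) ∈ Ω →
    DeltaOp p (fun y => u y + u (toEuclideanCLM (𝕜 := ℝ) Qᵀ (y - x₀))) x ≤ 0)
include hΩ hu hc

lemma dominativeQuadForm_hess_nonpos_of_inner_ne_zero {x : 𝔼} (hx : x ∈ Ω) {z : 𝔼}
    (hz : ⟪z, gradient u x⟫_ℝ ≠ 0) :
    dominativeQuadForm p (hess u x) z ≤ 0 := by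
  have hz0 : z ≠ 0 := by rintro rfl; simp at hz
  set Q := halfTurn z
  have hQ : Qᵀ * Q = 1 := halfTurn_orthogonal hz0
  have hQt : Qᵀ = Q := halfTurn_transpose z
  set x₀ := x - 𝕃 Q x
  have hTx : 𝕃 Qᵀ (x - x₀) = x := by
    rw [sub_sub_cancel, toEuclideanCLM_transpose_mul_apply hQ]
  have hTxΩ : 𝕃 Qᵀ (x - x₀) ∈ Ω := by rwa [hTx]
  have hQz : 𝕃 Qᵀ z = z := by
    have hz' : ‖z‖ ^ 2 ≠ 0 := by positivity
    rw [hQt, toEuclideanCLM_halfTurn, real_inner_self_eq_norm_sq, mul_div_assoc, div_self hz',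
      mul_one, two_smul, add_sub_cancel_right]
  set c := 2 * ⟪z, gradient u x⟫_ℝ / ‖z‖ ^ 2
  have hc0 : c ≠ 0 := div_ne_zero (mul_ne_zero two_ne_zero hz) (by positivity)
  have hgrad : gradient (fun y => u y + u (𝕃 Qᵀ (y - x₀))) x = c • z := by
    rw [(hasGradientAt_add_comp_affine hΩ hu Qᵀ x₀ hx hTxΩ).gradient, hTx, transpose_transpose,
      toEuclideanCLM_halfTurn, add_sub_cancel]
  have hH : hess (fun y => u y + u (𝕃 Qᵀ (y - x₀))) x = hess u x + Q * hess u x * Qᵀ := by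
    rw [hess_add_comp_affine hΩ hu Qᵀ x₀ hx hTxΩ, hTx, transpose_transpose]
  have h := hc Q hQ x₀ x hx hTxΩ
  rw [DeltaOp_nonpos_iff (hgrad ▸ smul_ne_zero hc0 hz0), hgrad, hH, dominativeQuadForm_smul,
    dominativeQuadForm_add, dominativeQuadForm_conj hQ, hQz] at h
  nlinarith [sq_pos_of_ne_zero hc0]

lemma dominativeQuadForm_hess_nonpos_of_gradient_ne_zero {x : 𝔼} (hx : x ∈ Ω)
    (hg : gradient u x ≠ 0) (z : 𝔼) : dominativeQuadForm p (hess u x) z ≤ 0 := by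
  by_cases hz : ⟪z, gradient u x⟫_ℝ = 0
  · have hcont : Continuous fun t : ℝ =>
        dominativeQuadForm p (hess u x) (z + t • gradient u x) :=
      continuous_dominativeQuadForm.comp (f := fun t : ℝ => (hess u x, z + t • gradient u x))
        (by fun_prop)
    have hlim : Tendsto (fun t : ℝ => dominativeQuadForm p (hess u x) (z + t • gradient u x))
        (𝓝[≠] 0) (𝓝 (dominativeQuadForm p (hess u x) z)) := by
      convert (hcont.tendsto 0).mono_left nhdsWithin_le_nhds using 2
      simp
    refine le_of_tendsto hlim (eventually_nhdsWithin_of_forall fun t ht => ?_)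
    refine dominativeQuadForm_hess_nonpos_of_inner_ne_zero hΩ hu hc hx ?_
    rw [inner_add_left, hz, real_inner_smul_left, real_inner_self_eq_norm_sq, zero_add]
    exact mul_ne_zero ht (pow_ne_zero 2 (norm_ne_zero_iff.mpr hg))
  · exact dominativeQuadForm_hess_nonpos_of_inner_ne_zero hΩ hu hc hx hz

lemma dominativeQuadForm_hess_nonpos {x : 𝔼} (hx : x ∈ Ω) (z : 𝔼) :
    dominativeQuadForm p (hess u x) z ≤ 0 := by
  set S := {y | y ∈ Ω ∧ gradient u y ≠ 0}
  by_cases hxS : x ∈ closure S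
  · have := mem_closure_iff_nhdsWithin_neBot.mp hxS
    have hcont : Tendsto (fun y => dominativeQuadForm p (hess u y) z) (𝓝[S] x)
        (𝓝 (dominativeQuadForm p (hess u x) z)) :=
      ((continuous_dominativeQuadForm.comp_continuousOn
        ((continuousOn_hess hΩ hu).prodMk continuousOn_const)) x hx).tendsto.mono_left
        (nhdsWithin_mono _ fun y hy => hy.1)
    exact le_of_tendsto hcont (eventually_nhdsWithin_of_forall fun y hy =>
      dominativeQuadForm_hess_nonpos_of_gradient_ne_zero hΩ hu hc hy.1 hy.2 z)
  · have hcrit : ∀ᶠ y in 𝓝 x, gradient u y = 0 := by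
      filter_upwards [isClosed_closure.isOpen_compl.mem_nhds hxS, hΩ.mem_nhds hx] with y hyS hy
      by_contra hg
      exact hyS (subset_closure ⟨hy, hg⟩)
    rw [hess_eq_zero_of_gradient_eventuallyEq_zero hcrit, dominativeQuadForm_zero_left]

lemma Dop_nonpos_of_DeltaOp_add_comp_nonpos (hn : 0 < n) (hp : 2 ≤ p) {x : 𝔼} (hx : x ∈ Ω) :
    Dop p u x ≤ 0 :=
  dominative_nonpos_of_forall hn hp (dominativeQuadForm_hess_nonpos hΩ hu hc hx)

end Necessity

end

/-- Theorem 1 (ii), (c) ⇔ (d). -/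
theorem stmt_11 {n : ℕ} (hn : 2 ≤ n) (p : ℝ≥0∞) (hp : 2 ≤ p)
    (Ω : Set (EuclideanSpace ℝ (Fin n))) (hΩ : IsOpen Ω)
    (u : EuclideanSpace ℝ (Fin n) → ℝ) (hu : ContDiffOn ℝ 2 u Ω) :
    (∀ (Q : Matrix (Fin n) (Fin n) ℝ), Qᵀ * Q = 1 →
      ∀ x₀ : EuclideanSpace ℝ (Fin n),
      ∀ T : EuclideanSpace ℝ (Fin n) → EuclideanSpace ℝ (Fin n),
        (∀ x, ∀ i, T x i = Qᵀ.mulVec (fun j => x j - x₀ j) i) →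
        ∀ x, x ∈ Ω → T x ∈ Ω → DeltaOp p (fun z => u z + u (T z)) x ≤ 0) ↔
    (∀ x ∈ Ω, Dop p u x ≤ 0) := by
  have hn0 : 0 < n := by omega
  constructor
  · intro hc x hx
    exact Dop_nonpos_of_DeltaOp_add_comp_nonpos hΩ hu
      (fun Q hQ x₀ => hc Q hQ x₀ _ fun _ _ => rfl) hn0 hp hx
  · intro hD Q hQ x₀ T hT x hx hTx
    obtain rfl : T = fun y => toEuclideanCLM (𝕜 := ℝ) Qᵀ (y - x₀) :=
      funext fun y => PiLp.ext (hT y)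
    exact DeltaOp_add_comp_nonpos hn0 hp hΩ hu hD hQ x₀ hx hTx
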